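/- Assume the SDARE has at least one symmetric positive semidefinite solution. Then the fixed point iteration X₀ = 0, X_{t+1} = D(X_t) converges (in ℝ^{n×n}) to a symmetric positive semidefinite matrix X∞ satisfying X∞ = D(X∞), and X∞ ⪯ X̂ for every symmetric positive semidefinite solution X̂ of the SDARE; that is, the fixed point iteration converges to the minimal positive semidefinite solution (Theorem on convergence of fixed point iteration for SDAREs, part 2). -/

import Mathlib

/-!
Completing the square shows that `D(X)` is the Loewner-minimum over feedback gains `L` of
`(A + B L)ᵀ (X ⊗ I) (A + B L) + Lᵀ L + Cᵀ C`, attained at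
`L = -(I + Bᵀ (X ⊗ I) B)⁻¹ Bᵀ (X ⊗ I) A`. Each of these maps is monotone in `X`, hence so is `D`
on positive semidefinite matrices: the iterates from `0` increase and stay below every positive
semidefinite solution. A Loewner-increasing bounded sequence converges (its quadratic forms do,
and polarization recovers the entries). Since the Loewner order is closed, the limit is the least
upper bound of the iterates, hence below every positive semidefinite solution, and it is a fixed
point because `D` is continuous on positive semidefinite matrices.
-/

open Matrix
open scoped Kronecker

/-- The SDARE Riccati operator `D(X) = Aᵀ (X ⊗ I_r) (I + B Bᵀ (X ⊗ I_r))⁻¹ A + Cᵀ C`,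
with `rn` realized as the index type `Fin n × Fin r`. -/
noncomputable def Dop {n m l r : ℕ}
    (A : Matrix (Fin n × Fin r) (Fin n) ℝ)
    (B : Matrix (Fin n × Fin r) (Fin m) ℝ)
    (C : Matrix (Fin l) (Fin n) ℝ)
    (X : Matrix (Fin n) (Fin n) ℝ) : Matrix (Fin n) (Fin n) ℝ :=
  Aᵀ * (X ⊗ₖ (1 : Matrix (Fin r) (Fin r) ℝ)) *
      (1 + B * Bᵀ * (X ⊗ₖ (1 : Matrix (Fin r) (Fin r) ℝ)))⁻¹ * A + Cᵀ * C

open Filter Topology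
open scoped MatrixOrder ComplexOrder

namespace Matrix

section Loewner

variable {k 𝕜 : Type*} [Fintype k] [RCLike 𝕜]

theorem isClosed_setOf_posSemidef : IsClosed {M : Matrix k k 𝕜 | M.PosSemidef} := by
  simp only [posSemidef_iff_dotProduct_mulVec, Set.ofPred_and, Set.ofPred_forall]
  refine (isClosed_eq continuous_id.matrix_conjTranspose continuous_id).inter
    (isClosed_iInter fun x => isClosed_le continuous_const ?_)
  exact continuous_const.dotProduct (continuous_id.matrix_mulVec continuous_const)

instance instOrderClosedTopology : OrderClosedTopology (Matrix k k 𝕜) where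
  isClosed_le' := (isClosed_setOf_posSemidef (k := k) (𝕜 := 𝕜)).preimage
    (continuous_snd.sub continuous_fst)

theorem kronecker_one_le_kronecker_one {p : Type*} [Fintype p] [DecidableEq p]
    {X₁ X₂ : Matrix k k 𝕜} (h : X₁ ≤ X₂) :
    X₁ ⊗ₖ (1 : Matrix p p 𝕜) ≤ X₂ ⊗ₖ (1 : Matrix p p 𝕜) := by
  rw [← sub_add_cancel X₂ X₁, add_kronecker]
  exact le_add_of_nonneg_left ((le_iff.mp h).kronecker PosSemidef.one).nonneg

end Loewner

theorem continuous_kronecker_one {k p R : Type*} [DecidableEq p] [TopologicalSpace R] [Semiring R]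
    [IsTopologicalSemiring R] : Continuous fun X : Matrix k k R => X ⊗ₖ (1 : Matrix p p R) :=
  continuous_matrix fun _ _ => (continuous_id.matrix_elem _ _).mul continuous_const

section Real

variable {k : Type*} [Fintype k]

theorem dotProduct_mulVec_mono {M N : Matrix k k ℝ} (h : M ≤ N) (v : k → ℝ) :
    v ⬝ᵥ M *ᵥ v ≤ v ⬝ᵥ N *ᵥ v := by
  have := (le_iff.mp h).dotProduct_mulVec_nonneg v
  rwa [star_trivial, sub_mulVec, dotProduct_sub, sub_nonneg] at this

theorem IsSymm.apply_eq_polarization [DecidableEq k] {M : Matrix k k ℝ} (hM : M.IsSymm)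
    (i j : k) : M i j = ((Pi.single i 1 + Pi.single j 1) ⬝ᵥ M *ᵥ (Pi.single i 1 + Pi.single j 1)
      - Pi.single i 1 ⬝ᵥ M *ᵥ Pi.single i 1 - Pi.single j 1 ⬝ᵥ M *ᵥ Pi.single j 1) / 2 := by
  simp only [mulVec_add, dotProduct_add, add_dotProduct, mulVec_single_one, single_one_dotProduct,
    col_apply, hM.apply i j]
  ring

theorem exists_tendsto_of_monotone_of_bddAbove {X : ℕ → Matrix k k ℝ}
    (hX : ∀ t, (X t).IsSymm) (hmono : Monotone X) (hbdd : BddAbove (Set.range X)) :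
    ∃ L, Tendsto X atTop (𝓝 L) := by
  classical
  obtain ⟨U, hU⟩ := hbdd
  have hquad (v : k → ℝ) :
      Tendsto (fun t => v ⬝ᵥ X t *ᵥ v) atTop (𝓝 (⨆ t, v ⬝ᵥ X t *ᵥ v)) :=
    tendsto_atTop_ciSup (fun s t hst => dotProduct_mulVec_mono (hmono hst) v)
      ⟨v ⬝ᵥ U *ᵥ v, Set.forall_mem_range.mpr fun t => dotProduct_mulVec_mono (hU ⟨t, rfl⟩) v⟩
  set q : (k → ℝ) → ℝ := fun v => ⨆ t, v ⬝ᵥ X t *ᵥ v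
  set e : k → k → ℝ := fun i => Pi.single i 1
  refine ⟨of fun i j => (q (e i + e j) - q (e i) - q (e j)) / 2,
    tendsto_pi_nhds.mpr fun i => tendsto_pi_nhds.mpr fun j => ?_⟩
  simp only [fun t => (hX t).apply_eq_polarization i j]
  exact (((hquad _).sub (hquad _)).sub (hquad _)).div_const 2

theorem posSemidef_transpose_mul_mul {ι : Type*} [Fintype ι] {Y : Matrix ι ι ℝ}
    (hY : Y.PosSemidef) (M : Matrix ι k ℝ) : (Mᵀ * Y * M).PosSemidef := by
  simpa [conjTranspose_eq_transpose_of_trivial] using hY.conjTranspose_mul_mul_same M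

theorem posDef_one_add_transpose_mul_mul {ι : Type*} [Fintype ι] [DecidableEq k]
    {Y : Matrix ι ι ℝ} (hY : Y.PosSemidef) (B : Matrix ι k ℝ) : (1 + Bᵀ * Y * B).PosDef :=
  PosDef.one.add_posSemidef (posSemidef_transpose_mul_mul hY B)

end Real

end Matrix

section Riccati

variable {ι κ ν : Type*} [Fintype ι] [Fintype κ] [DecidableEq ι] [DecidableEq κ]
  (A : Matrix ι ν ℝ) (B : Matrix ι κ ℝ)

noncomputable def riccatiMap (Y : Matrix ι ι ℝ) : Matrix ν ν ℝ :=
  Aᵀ * Y * (1 + B * Bᵀ * Y)⁻¹ * A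

def riccatiCost (Y : Matrix ι ι ℝ) (L : Matrix κ ν ℝ) : Matrix ν ν ℝ :=
  (A + B * L)ᵀ * Y * (A + B * L) + Lᵀ * L

noncomputable def riccatiGain (Y : Matrix ι ι ℝ) : Matrix κ ν ℝ :=
  (1 + Bᵀ * Y * B)⁻¹ * (Bᵀ * Y * A)

variable {A B} {Y Y₁ Y₂ : Matrix ι ι ℝ}

theorem mul_inv_one_add_mul_transpose_mul (hY : Y.PosSemidef) :
    Y * (1 + B * Bᵀ * Y)⁻¹ = Y - Y * B * (1 + Bᵀ * Y * B)⁻¹ * (Bᵀ * Y) := by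
  have hG := (posDef_one_add_transpose_mul_mul hY B).isUnit
  have := add_mul_mul_inv_eq_sub 1 B 1 (Bᵀ * Y) isUnit_one isUnit_one
    (by simpa [Matrix.mul_assoc] using hG)
  simp only [inv_one, Matrix.mul_one, Matrix.one_mul] at this
  rw [Matrix.mul_assoc B, this]
  simp only [Matrix.mul_sub, Matrix.mul_one, Matrix.mul_assoc]

theorem riccatiCost_eq (hY : Y.PosSemidef) (L : Matrix κ ν ℝ) :
    riccatiCost A B Y L = riccatiMap A B Y +
      (L + riccatiGain A B Y)ᵀ * (1 + Bᵀ * Y * B) * (L + riccatiGain A B Y) := by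
  have hYt : Yᵀ = Y := hY.isHermitian
  have hGt : (1 + Bᵀ * Y * B)ᵀ = 1 + Bᵀ * Y * B := by
    simp [transpose_add, transpose_mul, hYt, Matrix.mul_assoc]
  have hGK : (1 + Bᵀ * Y * B) * riccatiGain A B Y = Bᵀ * Y * A := by
    rw [riccatiGain, ← Matrix.mul_assoc, mul_nonsing_inv _
      ((isUnit_iff_isUnit_det _).mp (posDef_one_add_transpose_mul_mul hY B).isUnit),
      Matrix.one_mul]
  have hKG : (riccatiGain A B Y)ᵀ * (1 + Bᵀ * Y * B) = Aᵀ * Y * B := by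
    rw [← hGt, ← transpose_mul, hGK]; simp [transpose_mul, hYt, Matrix.mul_assoc]
  set K := riccatiGain A B Y
  set G := 1 + Bᵀ * Y * B with hG
  have hriccati : riccatiMap A B Y = Aᵀ * Y * A - Aᵀ * Y * B * K := by
    rw [riccatiMap, Matrix.mul_assoc Aᵀ Y, mul_inv_one_add_mul_transpose_mul hY]
    simp only [K, riccatiGain, Matrix.mul_sub, Matrix.sub_mul, Matrix.mul_assoc]
  calc riccatiCost A B Y L
      = Aᵀ * Y * A + Aᵀ * Y * B * L + Lᵀ * (Bᵀ * Y * A) + Lᵀ * G * L := by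
        simp only [riccatiCost, hG, transpose_add, transpose_mul, Matrix.add_mul, Matrix.mul_add,
          Matrix.mul_one, Matrix.mul_assoc]
        abel
    _ = Aᵀ * Y * A - Aᵀ * Y * B * K + (Lᵀ * G * L + Lᵀ * (G * K) + Kᵀ * G * L + Kᵀ * G * K) := by
        rw [hGK, hKG]; simp only [Matrix.mul_assoc]; abel
    _ = _ := by
        rw [hriccati]; simp only [transpose_add, Matrix.add_mul, Matrix.mul_add, Matrix.mul_assoc]
        abel

theorem riccatiMap_le_riccatiCost [Fintype ν] (hY : Y.PosSemidef) (L : Matrix κ ν ℝ) :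
    riccatiMap A B Y ≤ riccatiCost A B Y L := by
  rw [riccatiCost_eq hY L]
  exact le_add_of_nonneg_right
    (posSemidef_transpose_mul_mul (posDef_one_add_transpose_mul_mul hY B).posSemidef _).nonneg

theorem riccatiMap_eq_riccatiCost_neg_gain (hY : Y.PosSemidef) :
    riccatiMap A B Y = riccatiCost A B Y (-riccatiGain A B Y) := by
  simp [riccatiCost_eq hY]

omit [DecidableEq ι] [DecidableEq κ] in
theorem riccatiCost_mono [Fintype ν] (h : Y₁ ≤ Y₂) (L : Matrix κ ν ℝ) :
    riccatiCost A B Y₁ L ≤ riccatiCost A B Y₂ L := by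
  refine add_le_add_left (le_iff.mpr ?_) _
  rw [← Matrix.sub_mul, ← Matrix.mul_sub]
  exact posSemidef_transpose_mul_mul (le_iff.mp h) _

theorem riccatiMap_mono [Fintype ν] (h₁ : 0 ≤ Y₁) (h : Y₁ ≤ Y₂) :
    riccatiMap A B Y₁ ≤ riccatiMap A B Y₂ :=
  calc riccatiMap A B Y₁ ≤ riccatiCost A B Y₁ (-riccatiGain A B Y₂) :=
        riccatiMap_le_riccatiCost h₁.posSemidef _
    _ ≤ riccatiCost A B Y₂ (-riccatiGain A B Y₂) := riccatiCost_mono h _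
    _ = riccatiMap A B Y₂ := (riccatiMap_eq_riccatiCost_neg_gain (h₁.trans h).posSemidef).symm

theorem riccatiMap_nonneg [Fintype ν] (hY : 0 ≤ Y) : 0 ≤ riccatiMap A B Y := by
  simpa [riccatiMap] using riccatiMap_mono (A := A) (B := B) le_rfl hY

theorem continuousAt_riccatiMap (hY : Y.PosSemidef) : ContinuousAt (riccatiMap A B) Y := by
  have hdet : (1 + B * Bᵀ * Y).det ≠ 0 := by
    rw [Matrix.mul_assoc, det_one_add_mul_comm]
    exact (posDef_one_add_transpose_mul_mul hY B).det_pos.ne'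
  have hinv : ContinuousAt (fun Y : Matrix ι ι ℝ => (1 + B * Bᵀ * Y)⁻¹) Y :=
    (continuousAt_matrix_inv _ (NormedRing.inverse_continuousAt (Units.mk0 _ hdet))).comp
      (f := fun Y : Matrix ι ι ℝ => 1 + B * Bᵀ * Y) (by fun_prop)
  have hassoc : riccatiMap A B = fun Y => Aᵀ * (Y * (1 + B * Bᵀ * Y)⁻¹) * A := by
    ext1 Y; simp only [riccatiMap, Matrix.mul_assoc]
  rw [hassoc]
  exact ((continuous_const.matrix_mul continuous_id).matrix_mul continuous_const).continuousAt.comp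
    (f := fun Y : Matrix ι ι ℝ => Y * (1 + B * Bᵀ * Y)⁻¹) (continuousAt_id.mul hinv)

end Riccati

section SDARE

variable {n m l r : ℕ} (A : Matrix (Fin n × Fin r) (Fin n) ℝ) (B : Matrix (Fin n × Fin r) (Fin m) ℝ)
  (C : Matrix (Fin l) (Fin n) ℝ) {X X₁ X₂ : Matrix (Fin n) (Fin n) ℝ}

theorem Dop_eq_riccatiMap (X : Matrix (Fin n) (Fin n) ℝ) :
    Dop A B C X = riccatiMap A B (X ⊗ₖ (1 : Matrix (Fin r) (Fin r) ℝ)) + Cᵀ * C :=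
  rfl

theorem Dop_mono (h₁ : 0 ≤ X₁) (h : X₁ ≤ X₂) : Dop A B C X₁ ≤ Dop A B C X₂ := by
  simp only [Dop_eq_riccatiMap]
  gcongr ?_ + _
  exact riccatiMap_mono ((nonneg_iff_posSemidef.mp h₁).kronecker PosSemidef.one).nonneg
    (kronecker_one_le_kronecker_one h)

theorem Dop_nonneg (h : 0 ≤ X) : 0 ≤ Dop A B C X := by
  have hCC : 0 ≤ Cᵀ * C := by simpa using (posSemidef_transpose_mul_mul PosSemidef.one C).nonneg
  exact add_nonneg
    (riccatiMap_nonneg ((nonneg_iff_posSemidef.mp h).kronecker PosSemidef.one).nonneg) hCC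

theorem continuousAt_Dop (hX : X.PosSemidef) : ContinuousAt (Dop A B C) X := by
  rw [show Dop A B C = fun X => riccatiMap A B (X ⊗ₖ (1 : Matrix (Fin r) (Fin r) ℝ)) + Cᵀ * C
    from funext (Dop_eq_riccatiMap A B C)]
  exact ((continuousAt_riccatiMap (hX.kronecker PosSemidef.one)).comp
    (f := fun X : Matrix (Fin n) (Fin n) ℝ => X ⊗ₖ (1 : Matrix (Fin r) (Fin r) ℝ))
    continuous_kronecker_one.continuousAt).add continuousAt_const

end SDARE

theorem stmt3 {n m l r : ℕ}
    (A : Matrix (Fin n × Fin r) (Fin n) ℝ)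
    (B : Matrix (Fin n × Fin r) (Fin m) ℝ)
    (C : Matrix (Fin l) (Fin n) ℝ)
    (Xseq : ℕ → Matrix (Fin n) (Fin n) ℝ)
    (h0 : Xseq 0 = 0)
    (hstep : ∀ t, Xseq (t + 1) = Dop A B C (Xseq t))
    (hex : ∃ Xhat : Matrix (Fin n) (Fin n) ℝ, Xhat.PosSemidef ∧ Xhat = Dop A B C Xhat) :
    ∃ Xinf : Matrix (Fin n) (Fin n) ℝ, Xinf.PosSemidef ∧
      Filter.Tendsto Xseq Filter.atTop (nhds Xinf) ∧
      Xinf = Dop A B C Xinf ∧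
      ∀ Xhat : Matrix (Fin n) (Fin n) ℝ, Xhat.PosSemidef → Xhat = Dop A B C Xhat →
        (Xhat - Xinf).PosSemidef := by
  have hnonneg (t : ℕ) : 0 ≤ Xseq t := by
    induction t with
    | zero => exact h0.ge
    | succ t ih => exact hstep t ▸ Dop_nonneg A B C ih
  have hmono : Monotone Xseq := by
    refine monotone_nat_of_le_succ fun t => ?_
    induction t with
    | zero => exact h0 ▸ hnonneg 1
    | succ t ih => rw [hstep, hstep (t + 1)]; exact Dop_mono A B C (hnonneg t) ih
  have hle_solution {W} (hW : 0 ≤ W) (hWfix : W = Dop A B C W) (t : ℕ) : Xseq t ≤ W := by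
    induction t with
    | zero => exact h0 ▸ hW
    | succ t ih => rw [hstep, hWfix]; exact Dop_mono A B C (hnonneg t) ih
  obtain ⟨Xhat, hXhat, hfix⟩ := hex
  obtain ⟨Xinf, hlim⟩ := exists_tendsto_of_monotone_of_bddAbove
    (fun t => isHermitian_iff_isSymm.mp (hnonneg t).posSemidef.isHermitian) hmono
    ⟨Xhat, Set.forall_mem_range.mpr (hle_solution hXhat.nonneg hfix)⟩
  have hlub := isLUB_of_tendsto_atTop hmono hlim
  have hXinf : 0 ≤ Xinf := h0 ▸ hlub.1 ⟨0, rfl⟩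
  refine ⟨Xinf, hXinf.posSemidef, hlim, ?_, fun W hW hWfix => ?_⟩
  · have hshift : Xseq ∘ (· + 1) = Dop A B C ∘ Xseq := funext hstep
    exact tendsto_nhds_unique (hshift ▸ hlim.comp (tendsto_add_atTop_nat 1))
      ((continuousAt_Dop A B C hXinf.posSemidef).tendsto.comp hlim)
  · exact hlub.2 (Set.forall_mem_range.mpr (hle_solution hW.nonneg hWfix))
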